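/- Let n ≥ m ≥ 1, p ∈ ℝ^n, h ∈ ℝ^n a unit vector, and θ ∈ (0,π). Let R, R̃ ∈ SO(n) satisfy Rh = u_n/√n and R̃e_1 = u_n/√n, set λ := tan(θ_n/2)/tan(θ/2) if θ > θ_n and λ := 1 otherwise, W_θ := R̃ · diag(1, λ, …, λ) · R̃ᵀ, W := P^{n→m} W_θ R ∈ ℝ^{m×n}, and b := −Wp ∈ ℝ^m. Then W is surjective and for every x ∈ p + C_θ[−h], the truncation map satisfies τ_{W,b}(x) = (W⁺W) p; i.e. the entire backward cone is mapped to the projected base point. -/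

import Mathlib

open Matrix

/-- Euclidean norm on `Fin n → ℝ`. -/
noncomputable def vnorm {n : ℕ} (x : Fin n → ℝ) : ℝ := Real.sqrt (∑ i, x i * x i)

/-- The angle between two vectors: `arccos(⟨x,h⟩/(|x||h|))`. -/
noncomputable def angle' {n : ℕ} (x h : Fin n → ℝ) : ℝ :=
  Real.arccos ((∑ i, x i * h i) / (vnorm x * vnorm h))

/-- Membership in the cone `C_θ[h] = {x : angle(x,h) ≤ θ/2}` (by convention `0 ∈ C_θ[h]`). -/
def inCone {n : ℕ} (θ : ℝ) (h : Fin n → ℝ) (x : Fin n → ℝ) : Prop :=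
  x = 0 ∨ angle' x h ≤ θ / 2

/-- `θ_n := 2 arccos √((n−1)/n)`, the angle of the largest cone around the diagonal
contained in the positive sector. -/
noncomputable def thetaN (n : ℕ) : ℝ := 2 * Real.arccos (Real.sqrt (((n : ℝ) - 1) / n))

/-- The shrinking factor `λ(θ, θ_n)`. -/
noncomputable def lam (θ : ℝ) (n : ℕ) : ℝ :=
  if thetaN n < θ then Real.tan (thetaN n / 2) / Real.tan (θ / 2) else 1

/-- `W_θ := R̃ diag(1, λ, …, λ) R̃ᵀ`. -/
noncomputable def Wtheta {n : ℕ} (Rt : Matrix (Fin n) (Fin n) ℝ) (θ : ℝ) :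
    Matrix (Fin n) (Fin n) ℝ :=
  Rt * Matrix.diagonal (fun i : Fin n => if (i : ℕ) = 0 then (1 : ℝ) else lam θ n) * Rtᵀ

/-- The coordinate projection `P^{n→m}`, sending `e_i^n` to `e_i^m` for `i ≤ m`, else to `0`. -/
def coordProj (m n : ℕ) : Matrix (Fin m) (Fin n) ℝ :=
  Matrix.of fun i j => if (i : ℕ) = (j : ℕ) then 1 else 0

/-- Moore–Penrose generalized inverse of a surjective matrix: `W⁺ = Wᵀ (W Wᵀ)⁻¹`. -/
noncomputable def pinv {m n : ℕ} (W : Matrix (Fin m) (Fin n) ℝ) :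
    Matrix (Fin n) (Fin m) ℝ :=
  Wᵀ * (W * Wᵀ)⁻¹

/-- Componentwise ReLU. -/
noncomputable def relu {d : ℕ} (v : Fin d → ℝ) : Fin d → ℝ := fun i => max (v i) 0

/-- The truncation map `τ_{W,b}(x) := W⁺ (σ(Wx + b) − b)`. -/
noncomputable def tau {m n : ℕ} (W : Matrix (Fin m) (Fin n) ℝ) (b : Fin m → ℝ)
    (x : Fin n → ℝ) : Fin n → ℝ :=
  (pinv W).mulVec (relu (W.mulVec x + b) - b)


section Helpers

lemma sum_sq_nonneg' {n : ℕ} (s : Finset (Fin n)) (a : Fin n → ℝ) :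
    0 ≤ ∑ i ∈ s, a i * a i :=
  Finset.sum_nonneg fun _ _ => mul_self_nonneg _

/-- Orthogonal matrices preserve the dot product. -/
lemma orth_dot {n : ℕ} (R : Matrix (Fin n) (Fin n) ℝ) (hR : Rᵀ * R = 1)
    (a b : Fin n → ℝ) : ∑ i, R.mulVec a i * R.mulVec b i = ∑ i, a i * b i := by
  have : R.mulVec a ⬝ᵥ R.mulVec b = a ⬝ᵥ b := by
    rw [Matrix.dotProduct_mulVec, ← Matrix.mulVec_transpose, Matrix.mulVec_mulVec, hR,
      Matrix.one_mulVec]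
  simpa [dotProduct] using this

/-- Cauchy–Schwarz in sum form. -/
lemma cs_sum {n : ℕ} (a b : Fin n → ℝ) :
    |∑ i, a i * b i| ≤ Real.sqrt (∑ i, a i * a i) * Real.sqrt (∑ i, b i * b i) := by
  have h := Finset.sum_mul_sq_le_sq_mul_sq Finset.univ a b
  have h1 : |∑ i, a i * b i| = Real.sqrt ((∑ i, a i * b i) ^ 2) := by
    rw [Real.sqrt_sq_eq_abs]
  rw [h1, ← Real.sqrt_mul (sum_sq_nonneg' _ a)]
  apply Real.sqrt_le_sqrt
  calc (∑ i, a i * b i) ^ 2 ≤ (∑ i, a i ^ 2) * ∑ i, b i ^ 2 := h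
    _ = (∑ i, a i * a i) * ∑ i, b i * b i := by simp [sq]

/-- A vector whose sum is at least `√(n-1)` times its norm is componentwise nonnegative. -/
lemma cone_in_orthant {n : ℕ} (z : Fin n → ℝ)
    (h : Real.sqrt ((n : ℝ) - 1) * Real.sqrt (∑ i, z i * z i) ≤ ∑ i, z i) :
    ∀ k, 0 ≤ z k := by
  intro k
  by_contra hk
  push_neg at hk
  set s : Finset (Fin n) := Finset.univ.erase k with hs
  have hsum : ∑ i, z i = (∑ i ∈ s, z i) + z k := by
    rw [hs, Finset.sum_erase_add _ _ (Finset.mem_univ k)]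
  have hn1 : 1 ≤ n := Fin.pos k
  have hn1' : (0:ℝ) ≤ (n : ℝ) - 1 := by
    have : (1:ℝ) ≤ (n:ℝ) := by exact_mod_cast hn1
    linarith
  have hcard : (s.card : ℝ) = (n : ℝ) - 1 := by
    rw [hs, Finset.card_erase_of_mem (Finset.mem_univ k), Finset.card_univ, Fintype.card_fin]
    push_cast [Nat.cast_sub hn1]
    ring
  have hcs : (∑ i ∈ s, z i) ≤ Real.sqrt ((n : ℝ) - 1) * Real.sqrt (∑ i ∈ s, z i * z i) := by
    rcases le_or_gt (∑ i ∈ s, z i) 0 with h0 | h0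
    · exact h0.trans (mul_nonneg (Real.sqrt_nonneg _) (Real.sqrt_nonneg _))
    · have h2 : (∑ i ∈ s, z i) ^ 2 ≤ ((n : ℝ) - 1) * ∑ i ∈ s, z i * z i := by
        have := Finset.sum_mul_sq_le_sq_mul_sq s z (fun _ => (1 : ℝ))
        simp only [mul_one, one_pow, Finset.sum_const, nsmul_eq_mul] at this
        calc (∑ i ∈ s, z i) ^ 2 ≤ (∑ i ∈ s, z i ^ 2) * s.card := this
          _ = ((n : ℝ) - 1) * ∑ i ∈ s, z i * z i := by
              rw [← hcard]
              simp only [sq]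
              ring
      calc (∑ i ∈ s, z i) = Real.sqrt ((∑ i ∈ s, z i) ^ 2) := by
            rw [Real.sqrt_sq h0.le]
        _ ≤ Real.sqrt (((n : ℝ) - 1) * ∑ i ∈ s, z i * z i) := Real.sqrt_le_sqrt h2
        _ = Real.sqrt ((n : ℝ) - 1) * Real.sqrt (∑ i ∈ s, z i * z i) :=
            Real.sqrt_mul hn1' _
  have hsq : ∑ i, z i * z i = (∑ i ∈ s, z i * z i) + z k * z k := by
    rw [hs, Finset.sum_erase_add _ _ (Finset.mem_univ k)]
  have hle : Real.sqrt (∑ i ∈ s, z i * z i) ≤ Real.sqrt (∑ i, z i * z i) := by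
    apply Real.sqrt_le_sqrt
    rw [hsq]
    nlinarith
  nlinarith [h, hcs, hle, Real.sqrt_nonneg ((n:ℝ)-1), Real.sqrt_nonneg (∑ i ∈ s, z i * z i)]

lemma thetaN_one : thetaN 1 = Real.pi := by
  simp [thetaN, Real.arccos_zero]
  ring

lemma n_ge_two {n : ℕ} (hn : 1 ≤ n) {θ : ℝ} (hθπ : θ < Real.pi) (hc : thetaN n < θ) :
    2 ≤ n := by
  rcases Nat.lt_or_ge n 2 with h | h
  · have h1 : n = 1 := by omega
    subst h1
    rw [thetaN_one] at hc; linarith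
  · exact h

lemma half_thetaN {n : ℕ} (hn : 2 ≤ n) :
    0 < thetaN n / 2 ∧ thetaN n / 2 < Real.pi / 2 ∧
    Real.cos (thetaN n / 2) = Real.sqrt (((n : ℝ) - 1) / n) := by
  have hN : (2:ℝ) ≤ (n:ℝ) := by exact_mod_cast hn
  have h0 : (0:ℝ) < ((n:ℝ) - 1) / n := by
    apply div_pos <;> linarith
  have h1 : ((n:ℝ) - 1) / n < 1 := by
    rw [div_lt_one (by linarith)]; linarith
  have heq : thetaN n / 2 = Real.arccos (Real.sqrt (((n : ℝ) - 1) / n)) := by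
    unfold thetaN; ring
  refine ⟨?_, ?_, ?_⟩
  · rw [heq]
    refine Real.arccos_pos.mpr ?_
    have := Real.sqrt_lt_sqrt h0.le h1
    rwa [Real.sqrt_one] at this
  · rw [heq]; exact Real.arccos_lt_pi_div_two.mpr (Real.sqrt_pos.mpr h0)
  · rw [heq]
    exact Real.cos_arccos (by linarith [Real.sqrt_nonneg (((n:ℝ)-1)/n)])
      (Real.sqrt_le_one.mpr h1.le)

lemma lam_pos {n : ℕ} (hn : 1 ≤ n) {θ : ℝ} (hθ0 : 0 < θ) (hθπ : θ < Real.pi) :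
    0 < lam θ n := by
  unfold lam
  split_ifs with hc
  · have hn2 := n_ge_two hn hθπ hc
    obtain ⟨ha, hb, -⟩ := half_thetaN hn2
    have h1 : 0 < Real.tan (thetaN n / 2) := Real.tan_pos_of_pos_of_lt_pi_div_two ha hb
    have h2 : 0 < Real.tan (θ / 2) := Real.tan_pos_of_pos_of_lt_pi_div_two (by linarith)
      (by linarith)
    positivity
  · norm_num

lemma lam_sq_key {n : ℕ} (hn2 : 2 ≤ n) :
    ((n:ℝ) - 1) * Real.tan (thetaN n / 2) ^ 2 = 1 := by
  have hN : (2:ℝ) ≤ (n:ℝ) := by exact_mod_cast hn2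
  have hNne : (n:ℝ) ≠ 0 := by linarith
  have hN1ne : (n:ℝ) - 1 ≠ 0 := by linarith
  obtain ⟨ha, hb, hc⟩ := half_thetaN hn2
  have hcospos : 0 < Real.cos (thetaN n / 2) := Real.cos_pos_of_mem_Ioo
    ⟨by linarith [Real.pi_pos], hb⟩
  have hdivnn : (0:ℝ) ≤ ((n:ℝ) - 1) / n := div_nonneg (by linarith) (by linarith)
  have hsq : Real.sqrt (((n:ℝ) - 1) / n) ^ 2 = ((n:ℝ) - 1) / n := Real.sq_sqrt hdivnn
  have hsin : Real.sin (thetaN n / 2) ^ 2 = 1 / n := by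
    have hpy := Real.sin_sq_add_cos_sq (thetaN n / 2)
    rw [hc, hsq] at hpy
    have h2 : Real.sin (thetaN n / 2) ^ 2 = 1 - ((n:ℝ) - 1) / n := by linarith
    rw [h2]
    field_simp
    ring
  rw [Real.tan_eq_sin_div_cos, div_pow, hc, hsq, hsin]
  field_simp

lemma lam_ineq {n : ℕ} (hn : 1 ≤ n) {θ r s : ℝ} (hθ0 : 0 < θ) (hθπ : θ < Real.pi)
    (hr : 0 ≤ r) (h1 : r * Real.cos (θ / 2) ≤ s) (h2 : s ^ 2 ≤ r ^ 2) :
    ((n:ℝ) - 1) * lam θ n ^ 2 * (r ^ 2 - s ^ 2) ≤ s ^ 2 := by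
  have hN : (1:ℝ) ≤ (n:ℝ) := by exact_mod_cast hn
  have hcn : 0 < Real.cos (θ / 2) := Real.cos_pos_of_mem_Ioo
    ⟨by linarith [Real.pi_pos], by linarith⟩
  have hsn : 0 < Real.sin (θ / 2) := Real.sin_pos_of_pos_of_lt_pi (by linarith) (by linarith)
  have hpy := Real.sin_sq_add_cos_sq (θ / 2)
  have hrc : 0 ≤ r * Real.cos (θ / 2) := by positivity
  unfold lam
  split_ifs with hc
  · have hn2 := n_ge_two hn hθπ hc
    have hkey := lam_sq_key hn2
    have hexp : ((n:ℝ) - 1) * (Real.tan (thetaN n / 2) / Real.tan (θ / 2)) ^ 2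
        = Real.cos (θ / 2) ^ 2 / Real.sin (θ / 2) ^ 2 := by
      rw [Real.tan_eq_sin_div_cos (θ / 2), div_pow, div_pow, div_div_eq_mul_div]
      calc ((n:ℝ) - 1) * (Real.tan (thetaN n / 2) ^ 2 * Real.cos (θ / 2) ^ 2
              / Real.sin (θ / 2) ^ 2)
          = (((n:ℝ) - 1) * Real.tan (thetaN n / 2) ^ 2)
              * (Real.cos (θ / 2) ^ 2 / Real.sin (θ / 2) ^ 2) := by ring
        _ = Real.cos (θ / 2) ^ 2 / Real.sin (θ / 2) ^ 2 := by rw [hkey, one_mul]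
    rw [hexp, div_mul_eq_mul_div, div_le_iff₀ (by positivity)]
    nlinarith
  · push_neg at hc
    have hN2 : (0:ℝ) < (n:ℝ) := by linarith
    have heq : thetaN n / 2 = Real.arccos (Real.sqrt (((n : ℝ) - 1) / n)) := by
      unfold thetaN; ring
    have hdivnn : (0:ℝ) ≤ ((n:ℝ) - 1) / n := div_nonneg (by linarith) (by linarith)
    have hb2 : thetaN n / 2 ≤ Real.pi := by
      rw [heq]; exact Real.arccos_le_pi _
    have hcc : Real.cos (thetaN n / 2) ≤ Real.cos (θ / 2) :=
      Real.cos_le_cos_of_nonneg_of_le_pi (by linarith) hb2 (by linarith)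
    have hcval : Real.cos (thetaN n / 2) = Real.sqrt (((n : ℝ) - 1) / n) := by
      rw [heq]
      exact Real.cos_arccos (by linarith [Real.sqrt_nonneg (((n:ℝ)-1)/n)])
        (Real.sqrt_le_one.mpr (by rw [div_le_one (by linarith)]; linarith))
    have hsq : Real.sqrt (((n:ℝ) - 1) / n) ^ 2 = ((n:ℝ) - 1) / n := Real.sq_sqrt hdivnn
    have hs2 : ((n:ℝ) - 1) / n * r ^ 2 ≤ s ^ 2 := by
      have h3 : r * Real.sqrt (((n:ℝ)-1)/n) ≤ s := by
        calc r * Real.sqrt (((n:ℝ)-1)/n) = r * Real.cos (thetaN n / 2) := by rw [hcval]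
          _ ≤ r * Real.cos (θ / 2) := by nlinarith
          _ ≤ s := h1
      have h4 : 0 ≤ r * Real.sqrt (((n:ℝ)-1)/n) :=
        mul_nonneg hr (Real.sqrt_nonneg _)
      have h5 : (r * Real.sqrt (((n:ℝ)-1)/n)) ^ 2 ≤ s ^ 2 := pow_le_pow_left₀ h4 h3 2
      calc ((n:ℝ) - 1) / n * r ^ 2 = (r * Real.sqrt (((n:ℝ)-1)/n)) ^ 2 := by
            rw [mul_pow, hsq]; ring
        _ ≤ s ^ 2 := h5
    rw [one_pow, mul_one]
    have hthis : ((n:ℝ) - 1) * r ^ 2 ≤ (n:ℝ) * s ^ 2 := by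
      have hmul := mul_le_mul_of_nonneg_left hs2 (le_of_lt hN2)
      calc ((n:ℝ) - 1) * r ^ 2 = (n:ℝ) * (((n:ℝ) - 1) / n * r ^ 2) := by field_simp
        _ ≤ (n:ℝ) * s ^ 2 := hmul
    calc ((n:ℝ)-1)*(r^2-s^2) = ((n:ℝ)-1)*r^2 - ((n:ℝ)-1)*s^2 := by ring
      _ ≤ (n:ℝ)*s^2 - ((n:ℝ)-1)*s^2 := by linarith
      _ = s^2 := by ring

lemma dot_e1 {n : ℕ} (hn : 0 < n) (u : Fin n → ℝ) :
    ∑ j, u j * (if (j : ℕ) = 0 then (1:ℝ) else 0) = u ⟨0, hn⟩ := by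
  have hcongr : ∀ j ∈ Finset.univ,
      u j * (if (j : ℕ) = 0 then (1:ℝ) else 0)
        = if j = (⟨0, hn⟩ : Fin n) then u j else 0 := by
    intro j _
    by_cases hj : (j : ℕ) = 0
    · have hje : j = (⟨0, hn⟩ : Fin n) := Fin.ext hj
      simp [hj, hje]
    · have hje : j ≠ (⟨0, hn⟩ : Fin n) := fun e => hj (by rw [e])
      simp [hj, hje]
  rw [Finset.sum_congr rfl hcongr, Finset.sum_ite_eq']
  simp

lemma coordProj_mulVec {m n : ℕ} (hmn : m ≤ n) (u : Fin n → ℝ) (i : Fin m) :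
    (coordProj m n).mulVec u i = u (Fin.castLE hmn i) := by
  simp only [coordProj, Matrix.mulVec, dotProduct, Matrix.of_apply]
  rw [Finset.sum_eq_single (Fin.castLE hmn i)]
  · simp [Fin.castLE]
  · intro k _ hk
    have hne : (i : ℕ) ≠ (k : ℕ) := fun e => hk (Fin.ext (by simp [Fin.castLE, ← e]))
    simp [hne]
  · intro hmem; exact absurd (Finset.mem_univ _) hmem

lemma coordProj_mul_transpose {m n : ℕ} (hmn : m ≤ n) :
    coordProj m n * (coordProj m n)ᵀ = 1 := by
  ext i j
  simp only [Matrix.mul_apply, Matrix.transpose_apply, coordProj, Matrix.of_apply,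
    Matrix.one_apply]
  rw [Finset.sum_eq_single (Fin.castLE hmn i)]
  · simp [Fin.castLE, Fin.ext_iff, eq_comm]
  · intro k _ hk
    have hne : (i : ℕ) ≠ (k : ℕ) := fun e => hk (Fin.ext (by simp [Fin.castLE, ← e]))
    simp [hne]
  · intro hmem; exact absurd (Finset.mem_univ _) hmem

end Helpers

/-- with `W = P^{n→m} W_θ R` and `b = −Wp`, the matrix `W` is surjective and
the truncation map sends the entire backward cone `p + C_θ[−h]` to `(W⁺W)p`. -/
theorem tau_collapses_backward_cone {n m : ℕ} (hm : 1 ≤ m) (hmn : m ≤ n)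
    (p h : Fin n → ℝ) (hh : vnorm h = 1) (θ : ℝ) (hθ0 : 0 < θ) (hθπ : θ < Real.pi)
    (R Rt : Matrix (Fin n) (Fin n) ℝ)
    (hRorth : Rᵀ * R = 1) (hRdet : R.det = 1)
    (hRtorth : Rtᵀ * Rt = 1) (hRtdet : Rt.det = 1)
    (hRh : R.mulVec h = fun _ => (Real.sqrt n)⁻¹)
    (hRte : Rt.mulVec (fun i : Fin n => if (i : ℕ) = 0 then (1 : ℝ) else 0)
      = fun _ => (Real.sqrt n)⁻¹) :
    Function.Surjective (coordProj m n * Wtheta Rt θ * R).mulVec ∧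
    ∀ x : Fin n → ℝ, inCone θ (-h) (x - p) →
      tau (coordProj m n * Wtheta Rt θ * R)
          (-((coordProj m n * Wtheta Rt θ * R).mulVec p)) x
        = (pinv (coordProj m n * Wtheta Rt θ * R)
            * (coordProj m n * Wtheta Rt θ * R)).mulVec p := by

  have hn1 : 1 ≤ n := le_trans hm hmn
  have hn0 : 0 < n := hn1
  have hNpos : (0:ℝ) < (n:ℝ) := by exact_mod_cast hn0
  have hN1 : (0:ℝ) ≤ (n:ℝ) - 1 := by
    have : (1:ℝ) ≤ (n:ℝ) := by exact_mod_cast hn1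
    linarith
  have hsqn : (0:ℝ) < Real.sqrt n := Real.sqrt_pos.mpr hNpos
  have hlam : 0 < lam θ n := lam_pos hn1 hθ0 hθπ
  have hRR : R * Rᵀ = 1 := mul_eq_one_comm.mp hRorth
  have hRtRt : Rt * Rtᵀ = 1 := mul_eq_one_comm.mp hRtorth
  set W := coordProj m n * Wtheta Rt θ * R with hW
  -- surjectivity
  have hsurj : Function.Surjective W.mulVec := by
    set Dinv := Matrix.diagonal (fun i : Fin n => if (i:ℕ)=0 then (1:ℝ) else (lam θ n)⁻¹)
      with hDinv
    have hDD : Matrix.diagonal (fun i : Fin n => if (i : ℕ) = 0 then (1 : ℝ) else lam θ n)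
        * Dinv = 1 := by
      rw [hDinv, Matrix.diagonal_mul_diagonal]
      ext i j
      by_cases hij : i = j
      · subst hij
        by_cases hi : (i:ℕ) = 0
        · simp [hi]
        · simp [hi, mul_inv_cancel₀ (ne_of_gt hlam)]
      · simp [Matrix.diagonal_apply_ne _ hij, Matrix.one_apply_ne hij]
    have hWθ : Wtheta Rt θ * (Rt * Dinv * Rtᵀ) = 1 := by
      unfold Wtheta
      have e1 : Rt * Matrix.diagonal (fun i : Fin n => if (i : ℕ) = 0 then (1:ℝ) else lam θ n)
            * Rtᵀ * (Rt * Dinv * Rtᵀ)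
          = Rt * (Matrix.diagonal (fun i : Fin n => if (i : ℕ) = 0 then (1:ℝ) else lam θ n)
            * ((Rtᵀ * Rt) * (Dinv * Rtᵀ))) := by
        simp only [Matrix.mul_assoc]
      rw [e1, hRtorth, Matrix.one_mul, ← Matrix.mul_assoc _ Dinv Rtᵀ, hDD, Matrix.one_mul,
        hRtRt]
    intro yy
    refine ⟨(Rᵀ * (Rt * Dinv * Rtᵀ) * (coordProj m n)ᵀ).mulVec yy, ?_⟩
    rw [Matrix.mulVec_mulVec]
    have e2 : W * (Rᵀ * (Rt * Dinv * Rtᵀ) * (coordProj m n)ᵀ)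
        = coordProj m n * (Wtheta Rt θ * ((R * Rᵀ)
            * ((Rt * Dinv * Rtᵀ) * (coordProj m n)ᵀ))) := by
      rw [hW]; simp only [Matrix.mul_assoc]
    rw [e2, hRR, Matrix.one_mul, ← Matrix.mul_assoc (Wtheta Rt θ), hWθ, Matrix.one_mul,
      coordProj_mul_transpose hmn, Matrix.one_mulVec]
  -- key nonpositivity
  have key : ∀ x : Fin n → ℝ, inCone θ (-h) (x - p) → ∀ i : Fin m, W.mulVec (x - p) i ≤ 0 := by
    intro x hx
    set v := x - p with hv
    by_cases hv0 : v = 0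
    · intro i
      rw [hv0, Matrix.mulVec_zero]
      exact le_refl 0
    · have hvv : 0 < ∑ i, v i * v i := by
        have hex : ∃ i, v i ≠ 0 := by
          by_contra hco; push_neg at hco; exact hv0 (funext fun i => hco i)
        obtain ⟨j0, hj0⟩ := hex
        exact Finset.sum_pos' (fun i _ => mul_self_nonneg _)
          ⟨j0, Finset.mem_univ _, mul_self_pos.mpr hj0⟩
      have hr : 0 < vnorm v := by unfold vnorm; exact Real.sqrt_pos.mpr hvv
      have hcosθ : 0 < Real.cos (θ / 2) := Real.cos_pos_of_mem_Ioo
        ⟨by linarith [Real.pi_pos], by linarith⟩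
      have hangle : angle' v (-h) ≤ θ / 2 := by
        unfold inCone at hx
        rcases hx with h0 | h1
        · exact absurd h0 hv0
        · exact h1
      have hnh : vnorm (-h) = 1 := by
        unfold vnorm at hh ⊢
        rw [← hh]
        congr 1
        refine Finset.sum_congr rfl fun i _ => ?_
        simp
      -- the inner-product bound from the angle condition
      have hS : vnorm v * Real.cos (θ / 2) ≤ ∑ i, v i * (-h) i := by
        have hcs := cs_sum v (-h)
        have hcs' : |∑ i, v i * (-h) i| ≤ vnorm v * vnorm (-h) := by
          unfold vnorm; exact hcs
        rw [hnh, mul_one] at hcs'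
        have habs := abs_le.mp hcs'
        unfold angle' at hangle
        rw [hnh, mul_one] at hangle
        set t := (∑ i, v i * (-h) i) / vnorm v with ht
        have ht1 : -1 ≤ t := by
          rw [ht, le_div_iff₀ hr]; linarith [habs.1]
        have ht2 : t ≤ 1 := by
          rw [ht, div_le_one hr]; exact habs.2
        have hmon := Real.cos_le_cos_of_nonneg_of_le_pi (Real.arccos_nonneg t)
          (by linarith [Real.pi_pos]) hangle
        rw [Real.cos_arccos ht1 ht2] at hmon
        have := (le_div_iff₀ hr).mp hmon
        linarith [this]
      set w := R.mulVec v with hw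
      set y := Rtᵀ.mulVec w with hy
      set i0 : Fin n := ⟨0, hn0⟩ with hi0
      have hRty : Rt.mulVec y = w := by
        rw [hy, Matrix.mulVec_mulVec, hRtRt, Matrix.one_mulVec]
      have hyy : ∑ j, y j * y j = ∑ i, v i * v i := by
        have h1 : ∑ j, y j * y j = ∑ j, w j * w j := by
          rw [hy]
          exact orth_dot Rtᵀ (by rw [Matrix.transpose_transpose]; exact hRtRt) w w
        rw [h1, hw]
        exact orth_dot R hRorth v v
      have hy0 : y i0 = ∑ i, v i * h i := by
        have h2 := orth_dot Rt hRtorth y (fun j : Fin n => if (j : ℕ) = 0 then (1:ℝ) else 0)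
        simp only [hRty, hRte] at h2
        have h3 := orth_dot R hRorth v h
        simp only [← hw, hRh] at h3
        calc y i0 = ∑ j, y j * (if (j : ℕ) = 0 then (1:ℝ) else 0) := by
              rw [hi0]; exact (dot_e1 hn0 y).symm
          _ = ∑ j, w j * (Real.sqrt n)⁻¹ := h2.symm
          _ = ∑ i, v i * h i := h3
      set s := -(y i0) with hsdef
      have hSeq : ∑ i, v i * (-h) i = s := by
        rw [hsdef, hy0]
        rw [← Finset.sum_neg_distrib]
        refine Finset.sum_congr rfl fun i _ => ?_
        simp
      have hsbound : vnorm v * Real.cos (θ / 2) ≤ s := by rw [← hSeq]; exact hS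
      have hs0 : 0 ≤ s := le_trans (by positivity) hsbound
      have hr2 : vnorm v ^ 2 = ∑ j, y j * y j := by
        rw [hyy]
        unfold vnorm
        exact Real.sq_sqrt hvv.le
      have hs2 : s ^ 2 ≤ vnorm v ^ 2 := by
        rw [hr2]
        have := Finset.single_le_sum (f := fun j => y j * y j)
          (fun i _ => mul_self_nonneg _) (Finset.mem_univ i0)
        calc s ^ 2 = y i0 * y i0 := by rw [hsdef]; ring
          _ ≤ ∑ j, y j * y j := this
      set z : Fin n → ℝ :=
        fun j => -((if (j : ℕ) = 0 then (1:ℝ) else lam θ n) * y j) with hz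
      have hzi0 : z i0 = s := by
        rw [hz, hsdef]
        simp [hi0]
      have hzz : ∑ j, z j * z j
          = s ^ 2 + lam θ n ^ 2 * ((∑ j, y j * y j) - y i0 * y i0) := by
        have hsplit := Finset.add_sum_erase Finset.univ (fun j => z j * z j)
          (Finset.mem_univ i0)
        have herase : ∑ j ∈ Finset.univ.erase i0, z j * z j
            = lam θ n ^ 2 * ∑ j ∈ Finset.univ.erase i0, y j * y j := by
          rw [Finset.mul_sum]
          refine Finset.sum_congr rfl fun j hj => ?_
          have hjne : (j : ℕ) ≠ 0 := by
            intro hj0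
            exact (Finset.mem_erase.mp hj).1 (Fin.ext hj0)
          rw [hz]
          simp only [hjne, if_false]
          ring
        have herase2 : ∑ j ∈ Finset.univ.erase i0, y j * y j
            = (∑ j, y j * y j) - y i0 * y i0 := by
          have := Finset.add_sum_erase Finset.univ (fun j => y j * y j)
            (Finset.mem_univ i0)
          linarith
        have hzi0' : z i0 * z i0 = s ^ 2 := by rw [hzi0]; ring
        calc ∑ j, z j * z j = z i0 * z i0 + ∑ j ∈ Finset.univ.erase i0, z j * z j :=
              hsplit.symm
          _ = s ^ 2 + lam θ n ^ 2 * ((∑ j, y j * y j) - y i0 * y i0) := by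
              rw [hzi0', herase, herase2]
      have hli := lam_ineq hn1 hθ0 hθπ (le_of_lt hr) hsbound hs2
      have hzzineq : ((n:ℝ) - 1) * (∑ j, z j * z j) ≤ (n:ℝ) * s ^ 2 := by
        have hyi : y i0 * y i0 = s ^ 2 := by rw [hsdef]; ring
        rw [hzz, hyi, ← hr2]
        nlinarith [hli]
      set w' := Rt.mulVec z with hw'
      have hw'z : ∑ j, w' j * w' j = ∑ j, z j * z j := by
        rw [hw']; exact orth_dot Rt hRtorth z z
      have hw'sum : ∑ j, w' j = Real.sqrt n * s := by
        have h1 := orth_dot Rt hRtorth z (fun j : Fin n => if (j : ℕ) = 0 then (1:ℝ) else 0)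
        simp only [hRte] at h1
        rw [dot_e1 hn0 z, ← hi0, ← hw'] at h1
        have h2 : (∑ j, w' j) * (Real.sqrt n)⁻¹ = z i0 := by
          rw [Finset.sum_mul]; exact h1
        rw [hzi0] at h2
        field_simp at h2
        linarith [h2]
      have hfinal : Real.sqrt ((n:ℝ) - 1) * Real.sqrt (∑ j, w' j * w' j) ≤ ∑ j, w' j := by
        calc Real.sqrt ((n:ℝ) - 1) * Real.sqrt (∑ j, w' j * w' j)
            = Real.sqrt (((n:ℝ) - 1) * ∑ j, z j * z j) := by
              rw [hw'z, Real.sqrt_mul hN1]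
          _ ≤ Real.sqrt ((n:ℝ) * s ^ 2) := Real.sqrt_le_sqrt hzzineq
          _ = Real.sqrt n * s := by
              rw [Real.sqrt_mul (le_of_lt hNpos), Real.sqrt_sq hs0]
          _ = ∑ j, w' j := hw'sum.symm
      have horth := cone_in_orthant w' hfinal
      intro i
      have hcomp : W.mulVec v i = -(w' (Fin.castLE hmn i)) := by
        rw [hW]
        have h1 : (coordProj m n * Wtheta Rt θ * R).mulVec v
            = (coordProj m n).mulVec ((Wtheta Rt θ).mulVec w) := by
          rw [hw, ← Matrix.mulVec_mulVec, ← Matrix.mulVec_mulVec]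
        have h2 : (Wtheta Rt θ).mulVec w = -w' := by
          unfold Wtheta
          rw [← Matrix.mulVec_mulVec, ← Matrix.mulVec_mulVec, ← hy]
          have h3 : (Matrix.diagonal
              (fun i : Fin n => if (i : ℕ) = 0 then (1:ℝ) else lam θ n)).mulVec y = -z := by
            funext j
            rw [hz]
            simp [Matrix.mulVec_diagonal]
          rw [h3, Matrix.mulVec_neg, hw']
        rw [h1, h2, Matrix.mulVec_neg]
        have h4 : (coordProj m n).mulVec w' (Fin.castLE (le_refl m) i)
            = w' (Fin.castLE hmn i) := coordProj_mulVec hmn w' i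
        simp only [Pi.neg_apply]
        rw [coordProj_mulVec hmn w' i]
      rw [hcomp]
      simp [horth (Fin.castLE hmn i)]
  -- conclusion
  refine ⟨hsurj, fun x hx => ?_⟩
  have hneg := key x hx
  unfold tau
  have hrelu : relu (W.mulVec x + -(W.mulVec p)) = fun _ => (0:ℝ) := by
    funext i
    have hsub : W.mulVec x + -(W.mulVec p) = W.mulVec (x - p) := by
      rw [Matrix.mulVec_sub]
      funext j
      simp [sub_eq_add_neg]
    rw [hsub]
    simp only [relu]
    exact max_eq_right (hneg i)
  rw [hrelu]
  have hzero : (fun _ : Fin m => (0:ℝ)) - (-(W.mulVec p)) = W.mulVec p := by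
    funext i
    simp
  rw [hzero, Matrix.mulVec_mulVec]
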